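/- Let R be a unital ring and let X : ℝᵒᵖ → C(Mod R) be a functor to the category of (unbounded) cochain complexes of R-modules. Assume: (1) for every k ∈ ℤ and all reals r ≤ s, the map X_s^k → X_r^k is surjective; (2) for every k ∈ ℤ and every s ∈ ℝ, the natural map X_s^k → lim_{r<s} X_r^k is an isomorphism; (3) for every j ∈ ℤ and every s ∈ ℝ, the natural map colim_{t>s} H^j(X_t) → H^j(X_s) is an isomorphism. Then for every j ∈ ℤ and every s ∈ ℝ, the natural map H^j(X_s) → lim_{r<s} H^j(X_r) is bijective. -/

import Mathlib

open CategoryTheory CategoryTheory.Limits Opposite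

/-- The restriction of a functor `X : ℝᵒᵖ ⥤ C` to the (opposite of the) ordered set
`{t : ℝ // s < t}`. -/
def restrictGT {C : Type*} [Category C] (X : ℝᵒᵖ ⥤ C) (s : ℝ) :
    ({t : ℝ // s < t})ᵒᵖ ⥤ C :=
  (Monotone.functor (f := fun t : {t : ℝ // s < t} => (t : ℝ)) fun _ _ h => h).op ⋙ X

/-- The canonical cocone on `restrictGT X s` with apex `X s`, whose legs are the
transition maps `X t → X s` for `t > s`. -/
def coconeGT {C : Type*} [Category C] (X : ℝᵒᵖ ⥤ C) (s : ℝ) : Cocone (restrictGT X s) where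
  pt := X.obj (op s)
  ι :=
    { app := fun t => X.map (homOfLE t.unop.2.le).op
      naturality := fun a b f => by
        dsimp [restrictGT]
        rw [Category.comp_id]
        exact (X.map_comp _ _).symm.trans (congrArg X.map (Quiver.Hom.unop_inj (Subsingleton.elim _ _))) }

/-- The restriction of a functor `X : ℝᵒᵖ ⥤ C` to the (opposite of the) ordered set
`{r : ℝ // r < s}`. -/
def restrictLT {C : Type*} [Category C] (X : ℝᵒᵖ ⥤ C) (s : ℝ) :
    ({r : ℝ // r < s})ᵒᵖ ⥤ C :=
  (Monotone.functor (f := fun r : {r : ℝ // r < s} => (r : ℝ)) fun _ _ h => h).op ⋙ X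

/-- The canonical cone on `restrictLT X s` with apex `X s`, whose legs are the
transition maps `X s → X r` for `r < s`. -/
def coneLT {C : Type*} [Category C] (X : ℝᵒᵖ ⥤ C) (s : ℝ) : Cone (restrictLT X s) where
  pt := X.obj (op s)
  π :=
    { app := fun r => X.map (homOfLE r.unop.2.le).op
      naturality := fun a b f => by
        dsimp [restrictLT]
        rw [Category.id_comp]
        exact (congrArg X.map (Quiver.Hom.unop_inj (Subsingleton.elim _ _))).trans (X.map_comp _ _) }

/-- The functor `s ↦ X_s^k` of degree-`k` components. -/
def componentFunctor {R : Type} [Ring R]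
    (X : ℝᵒᵖ ⥤ CochainComplex (ModuleCat R) ℤ) (k : ℤ) : ℝᵒᵖ ⥤ ModuleCat R :=
  X ⋙ HomologicalComplex.eval (ModuleCat R) (ComplexShape.up ℤ) k

/-- The functor `s ↦ H^j(X_s)`. -/
noncomputable def cohomologyFunctor {R : Type} [Ring R]
    (X : ℝᵒᵖ ⥤ CochainComplex (ModuleCat R) ℤ) (j : ℤ) : ℝᵒᵖ ⥤ ModuleCat R :=
  X ⋙ HomologicalComplex.homologyFunctor (ModuleCat R) (ComplexShape.up ℤ) j


/- ### Auxiliary infrastructure ### -/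


section
variable {R : Type} [Ring R]

lemma fapp' {A B : ModuleCat R} {f g : A ⟶ B} (h : f = g) (x : A) : f x = g x := by rw [h]

variable (K : CochainComplex (ModuleCat R) ℤ)

lemma d_congr {a b b' : ℤ} (h : b = b') {x y : K.X a} (hxy : x = y) :
    (K.d a b x = 0) ↔ (K.d a b' y = 0) := by subst h hxy; rfl

lemma exists_d_congr {a a' b : ℤ} (h : a = a') (x : K.X b) :
    (∃ c : K.X a, K.d a b c = x) ↔ (∃ c : K.X a', K.d a' b c = x) := by subst h; rfl

/-- the cocycle as an element of the kernel of `(K.sc j).g` -/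
def kerMk (j : ℤ) (x : K.X j) (hx : K.d j (j+1) x = 0) :
    LinearMap.ker (K.sc j).g.hom :=
  ⟨x, (d_congr K (CochainComplex.next ℤ j) rfl).mpr hx⟩

/-- the homology class map, as a morphism -/
noncomputable def clsHom (j : ℤ) :
    ModuleCat.of R (LinearMap.ker (K.sc j).g.hom) ⟶ K.homology j :=
  (K.sc j).moduleCatCyclesIso.inv ≫ (K.sc j).homologyπ

/-- The cohomology class of a cocycle. -/
noncomputable def clsK (j : ℤ) (x : K.X j) (hx : K.d j (j+1) x = 0) : K.homology j :=
  clsHom K j (kerMk K j x hx)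

lemma clsHom_eq (j : ℤ) :
    clsHom K j = ((K.sc j).moduleCatLeftHomologyData.π ≫ (K.sc j).moduleCatHomologyIso.inv :
      ModuleCat.of R (LinearMap.ker (K.sc j).g.hom) ⟶ (K.sc j).homology) :=
  (K.sc j).moduleCatCyclesIso_inv_π

lemma clsK_surjective (j : ℤ) (γ : K.homology j) :
    ∃ (x : K.X j) (hx : K.d j (j+1) x = 0), clsK K j x hx = γ := by
  obtain ⟨c, hc⟩ := (ModuleCat.epi_iff_surjective ((K.sc j).homologyπ)).1 inferInstance γ
  set p := (K.sc j).moduleCatCyclesIso.hom c with hp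
  have hxp : K.d j (j+1) p.1 = 0 := (d_congr K (CochainComplex.next ℤ j) rfl).mp p.2
  refine ⟨p.1, hxp, ?_⟩
  have h1 : kerMk K j p.1 hxp = p := Subtype.ext rfl
  rw [show clsK K j p.1 hxp = clsHom K j (kerMk K j p.1 hxp) from rfl, h1, hp]
  show ((K.sc j).moduleCatCyclesIso.hom ≫ clsHom K j) c = γ
  rw [clsHom]
  have e : (K.sc j).moduleCatCyclesIso.hom ≫ (K.sc j).moduleCatCyclesIso.inv ≫
      (K.sc j).homologyπ = (K.sc j).homologyπ := Iso.hom_inv_id_assoc _ _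
  exact (fapp' e c).trans hc

lemma clsK_eq_zero_iff (j : ℤ) (x : K.X j) (hx : K.d j (j+1) x = 0) :
    clsK K j x hx = 0 ↔ ∃ b : K.X (j-1), K.d (j-1) j b = x := by
  rw [← (exists_d_congr K (CochainComplex.prev ℤ j) x)]
  rw [clsK, fapp' (clsHom_eq K j) (kerMk K j x hx)]
  have h0 : ((K.sc j).moduleCatHomologyIso.inv) (0 : (K.sc j).moduleCatLeftHomologyData.H) = 0 :=
    map_zero _
  have hinj : Function.Injective ((K.sc j).moduleCatHomologyIso.inv) :=
    (ModuleCat.mono_iff_injective _).1 inferInstance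
  constructor
  · intro h
    have := hinj ((h.trans h0.symm) :)
    change (Submodule.Quotient.mk (kerMk K j x hx) :
      _ ⧸ LinearMap.range (K.sc j).moduleCatToCycles) = 0 at this
    rw [Submodule.Quotient.mk_eq_zero] at this
    obtain ⟨b, hb⟩ := this
    exact ⟨b, congrArg Subtype.val hb⟩
  · rintro ⟨b, hb⟩
    have : (K.sc j).moduleCatLeftHomologyData.π (kerMk K j x hx) = 0 := by
      change (Submodule.Quotient.mk (kerMk K j x hx) :
        _ ⧸ LinearMap.range (K.sc j).moduleCatToCycles) = 0
      rw [Submodule.Quotient.mk_eq_zero]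
      exact ⟨b, Subtype.ext hb⟩
    show ((K.sc j).moduleCatHomologyIso.inv) (((K.sc j).moduleCatLeftHomologyData.π) (kerMk K j x hx)) = 0
    rw [this, h0]

lemma clsK_sub (j : ℤ) (x y : K.X j) (hx : K.d j (j+1) x = 0) (hy : K.d j (j+1) y = 0)
    (hxy : K.d j (j+1) (x - y) = 0) :
    clsK K j x hx - clsK K j y hy = clsK K j (x - y) hxy := by
  rw [clsK, clsK, clsK, ← map_sub]
  congr 1

end

section
variable {R : Type} [Ring R] {K L : CochainComplex (ModuleCat R) ℤ} (φ : K ⟶ L)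

lemma clsK_natural (j : ℤ) (x : K.X j) (hx : K.d j (j+1) x = 0)
    (hx' : L.d j (j+1) (φ.f j x) = 0) :
    HomologicalComplex.homologyMap φ j (clsK K j x hx) = clsK L j (φ.f j x) hx' := by
  have hψ : HomologicalComplex.homologyMap φ j =
      ShortComplex.homologyMap ((HomologicalComplex.shortComplexFunctor _ _ j).map φ) := rfl
  set ψ := (HomologicalComplex.shortComplexFunctor (ModuleCat R) (ComplexShape.up ℤ) j).map φ
    with hψdef
  rw [clsK, clsK, clsHom, hψ]
  show ((K.sc j).moduleCatCyclesIso.inv ≫ (K.sc j).homologyπ ≫ ShortComplex.homologyMap ψ)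
      (kerMk K j x hx) = _
  rw [ShortComplex.homologyπ_naturality ψ]
  have key : ((K.sc j).moduleCatCyclesIso.inv ≫ ShortComplex.cyclesMap ψ) (kerMk K j x hx)
      = (L.sc j).moduleCatCyclesIso.inv (kerMk L j (φ.f j x) hx') := by
    have hmono : Function.Injective ((L.sc j).iCycles) :=
      (ModuleCat.mono_iff_injective _).1 inferInstance
    apply hmono
    have e1 : (((K.sc j).moduleCatCyclesIso.inv ≫ ShortComplex.cyclesMap ψ) ≫ (L.sc j).iCycles)
        = (K.sc j).moduleCatCyclesIso.inv ≫ (K.sc j).iCycles ≫ ψ.τ₂ := by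
      rw [Category.assoc, ShortComplex.cyclesMap_i]
    have e2 := fapp' e1 (kerMk K j x hx)
    rw [show (((K.sc j).moduleCatCyclesIso.inv ≫ ShortComplex.cyclesMap ψ) ≫ (L.sc j).iCycles)
        (kerMk K j x hx) = ((L.sc j).iCycles)
          (((K.sc j).moduleCatCyclesIso.inv ≫ ShortComplex.cyclesMap ψ) (kerMk K j x hx))
        from rfl] at e2
    rw [e2]
    have e3 := fapp' ((K.sc j).moduleCatCyclesIso_inv_iCycles) (kerMk K j x hx)
    have e4 := fapp' ((L.sc j).moduleCatCyclesIso_inv_iCycles) (kerMk L j (φ.f j x) hx')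
    rw [show ((K.sc j).moduleCatCyclesIso.inv ≫ (K.sc j).iCycles ≫ ψ.τ₂) (kerMk K j x hx)
      = ψ.τ₂ (((K.sc j).moduleCatCyclesIso.inv ≫ (K.sc j).iCycles) (kerMk K j x hx)) from rfl,
      e3]
    rw [show (L.sc j).iCycles ((L.sc j).moduleCatCyclesIso.inv (kerMk L j (φ.f j x) hx'))
      = ((L.sc j).moduleCatCyclesIso.inv ≫ (L.sc j).iCycles) (kerMk L j (φ.f j x) hx') from rfl,
      e4]
    rfl
  show ((K.sc j).moduleCatCyclesIso.inv ≫ ShortComplex.cyclesMap ψ ≫ (L.sc j).homologyπ)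
      (kerMk K j x hx) = _
  rw [show ((K.sc j).moduleCatCyclesIso.inv ≫ ShortComplex.cyclesMap ψ ≫ (L.sc j).homologyπ)
      (kerMk K j x hx) = ((L.sc j).homologyπ)
        (((K.sc j).moduleCatCyclesIso.inv ≫ ShortComplex.cyclesMap ψ) (kerMk K j x hx))
      from rfl, key]
  rfl
end

section Infra
variable {R : Type} [Ring R] (X : ℝᵒᵖ ⥤ CochainComplex (ModuleCat R) ℤ)

/-- components -/
abbrev ob (k : ℤ) (r : ℝ) : ModuleCat R := ((componentFunctor X k).obj (op r))

/-- restriction maps on components -/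
def rs (k : ℤ) {r r' : ℝ} (h : r ≤ r') : ob X k r' ⟶ ob X k r :=
  (componentFunctor X k).map (homOfLE h).op

lemma fapp {A B : ModuleCat R} {f g : A ⟶ B} (h : f = g) (x : A) : f x = g x := by rw [h]

lemma rs_rs (k : ℤ) {r r' r'' : ℝ} (h : r ≤ r') (h' : r' ≤ r'') (x : ob X k r'') :
    rs X k h (rs X k h' x) = rs X k (h.trans h') x := by
  have e : rs X k h' ≫ rs X k h = rs X k (h.trans h') := by
    rw [rs, rs, rs, ← Functor.map_comp]
    rfl
  exact fapp e x

/-- differentials -/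
def dI (a b : ℤ) (r : ℝ) : ob X a r ⟶ ob X b r := (X.obj (op r)).d a b

lemma rs_dI (a b : ℤ) {r r' : ℝ} (h : r ≤ r') (x : ob X a r') :
    rs X b h (dI X a b r' x) = dI X a b r (rs X a h x) := by
  have e : dI X a b r' ≫ rs X b h = rs X a h ≫ dI X a b r :=
    ((X.map (homOfLE h).op).comm a b).symm
  exact fapp e x

lemma dI_dI (a b c : ℤ) (r : ℝ) (x : ob X a r) : dI X b c r (dI X a b r x) = 0 := by
  have e : dI X a b r ≫ dI X b c r = 0 := (X.obj (op r)).d_comp_d a b c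
  have := fapp e x
  simpa using this

/-- cohomology -/
noncomputable abbrev hob (j : ℤ) (r : ℝ) : ModuleCat R := ((cohomologyFunctor X j).obj (op r))

noncomputable def hrs (j : ℤ) {r r' : ℝ} (h : r ≤ r') : hob X j r' ⟶ hob X j r :=
  (cohomologyFunctor X j).map (homOfLE h).op

lemma hrs_hrs (j : ℤ) {r r' r'' : ℝ} (h : r ≤ r') (h' : r' ≤ r'') (x : hob X j r'') :
    hrs X j h (hrs X j h' x) = hrs X j (h.trans h') x := by
  have e : hrs X j h' ≫ hrs X j h = hrs X j (h.trans h') := by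
    rw [hrs, hrs, hrs, ← Functor.map_comp]
    rfl
  exact fapp e x

lemma limit_criterion (k : ℤ) (s : ℝ)
    (hIso : IsIso (limit.lift (restrictLT (componentFunctor X k) s)
      (coneLT (componentFunctor X k) s)))
    (f : ∀ r : {r : ℝ // r < s}, ob X k r)
    (hf : ∀ (a b : {r : ℝ // r < s}) (h : (a : ℝ) ≤ (b : ℝ)), rs X k h (f b) = f a) :
    ∃! x : ob X k s, ∀ r : {r : ℝ // r < s}, rs X k r.2.le x = f r := by
  haveI h1 : IsIso ((limit.isLimit (restrictLT (componentFunctor X k) s)).lift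
      (coneLT (componentFunctor X k) s)) := hIso
  have hL : IsLimit (coneLT (componentFunctor X k) s) :=
    IsLimit.ofPointIso (limit.isLimit _)
  have hT := isLimitOfPreserves (forget (ModuleCat R)) hL
  have hsec : (fun rr : ({r : ℝ // r < s})ᵒᵖ => f rr.unop) ∈
      (restrictLT (componentFunctor X k) s ⋙ forget (ModuleCat R)).sections := by
    intro a b g
    exact hf b.unop a.unop (leOfHom g.unop)
  obtain ⟨x, hx, hx'⟩ := (Types.isLimit_iff _).mp ⟨hT⟩ _ hsec
  exact ⟨x, fun r => hx (op r), fun y hy => hx' y (fun rr => hy rr.unop)⟩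

lemma colimit_criterion (j : ℤ) (s : ℝ)
    (hIso : IsIso (colimit.desc (restrictGT (cohomologyFunctor X j) s)
      (coconeGT (cohomologyFunctor X j) s))) (γ : hob X j s) :
    ∃ (t : ℝ) (ht : s < t) (δ : hob X j t), hrs X j ht.le δ = γ := by
  haveI h1 : IsIso ((colimit.isColimit (restrictGT (cohomologyFunctor X j) s)).desc
      (coconeGT (cohomologyFunctor X j) s)) := hIso
  have hC : IsColimit (coconeGT (cohomologyFunctor X j) s) :=
    IsColimit.ofPointIso (colimit.isColimit _)
  haveI : Nonempty {t : ℝ // s < t} := ⟨⟨s+1, by linarith⟩⟩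
  haveI : IsDirected {t : ℝ // s < t} (· ≥ ·) :=
    ⟨fun a b => ⟨⟨min a.1 b.1, lt_min a.2 b.2⟩, min_le_left _ _, min_le_right _ _⟩⟩
  have hT := isColimitOfPreserves (forget (ModuleCat R)) hC
  obtain ⟨tt, y, hy⟩ := Types.jointly_surjective _ hT γ
  exact ⟨tt.unop.1, tt.unop.2, y, hy⟩

lemma bijective_criterion (j : ℤ) (s : ℝ)
    (hu : ∀ γ₁ γ₂ : hob X j s,
      (∀ r : {r : ℝ // r < s}, hrs X j r.2.le γ₁ = hrs X j r.2.le γ₂) → γ₁ = γ₂)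
    (he : ∀ (f : ∀ r : {r : ℝ // r < s}, hob X j r),
      (∀ (a b : {r : ℝ // r < s}) (h : (a:ℝ) ≤ (b:ℝ)), hrs X j h (f b) = f a) →
      ∃ γ : hob X j s, ∀ r : {r : ℝ // r < s}, hrs X j r.2.le γ = f r) :
    Function.Bijective (limit.lift (restrictLT (cohomologyFunctor X j) s)
      (coneLT (cohomologyFunctor X j) s)) := by
  have hT : Nonempty (IsLimit ((forget (ModuleCat R)).mapCone
      (coneLT (cohomologyFunctor X j) s))) := by
    rw [Types.isLimit_iff]
    intro sec hsec
    have hcompat : ∀ (a b : {r : ℝ // r < s}) (h : (a:ℝ) ≤ (b:ℝ)),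
        hrs X j h (sec (op b)) = sec (op a) :=
      fun a b h => hsec ((homOfLE h).op : op b ⟶ op a)
    obtain ⟨γ, hγ⟩ := he (fun r => sec (op r)) hcompat
    refine ⟨γ, fun rr => hγ rr.unop, fun y hy => hu y γ ?_⟩
    intro r
    rw [hγ r]
    exact hy (op r)
  haveI : ReflectsLimitsOfShape ({r : ℝ // r < s})ᵒᵖ (forget (ModuleCat R)) :=
    reflectsLimitsOfShape_of_reflectsIsomorphisms
  have hL : IsLimit (coneLT (cohomologyFunctor X j) s) :=
    isLimitOfReflects (forget _) hT.some
  have hii : IsIso ((limit.isLimit (restrictLT (cohomologyFunctor X j) s)).lift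
      (coneLT (cohomologyFunctor X j) s)) :=
    (hL.conePointUniqueUpToIso (limit.isLimit (restrictLT (cohomologyFunctor X j) s))).isIso_hom
  rw [limit.isLimit_lift] at hii
  haveI := hii
  show Function.Bijective ((forget (ModuleCat R)).map (limit.lift
    (restrictLT (cohomologyFunctor X j) s) (coneLT (cohomologyFunctor X j) s)))
  exact ConcreteCategory.bijective_of_isIso _


lemma dI_congr (a : ℤ) {b b' : ℤ} (hb : b = b') (r : ℝ) {x y : ob X a r} (hxy : x = y) :
    dI X a b r x = 0 ↔ dI X a b' r y = 0 :=
  d_congr (X.obj (op r)) hb hxy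

/-- The cohomology class of a cocycle, in the `X`-indexed setting. -/
noncomputable def cl (j : ℤ) (r : ℝ) (x : ob X j r) (hx : dI X j (j+1) r x = 0) :
    hob X j r :=
  clsK (X.obj (op r)) j x hx

lemma cl_surjective (j : ℤ) (r : ℝ) (γ : hob X j r) :
    ∃ (x : ob X j r) (hx : dI X j (j+1) r x = 0), cl X j r x hx = γ :=
  clsK_surjective (X.obj (op r)) j γ

lemma cl_eq_zero_iff (j : ℤ) (r : ℝ) (x : ob X j r) (hx : dI X j (j+1) r x = 0) :
    cl X j r x hx = 0 ↔ ∃ b : ob X (j-1) r, dI X (j-1) j r b = x :=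
  clsK_eq_zero_iff (X.obj (op r)) j x hx

lemma cl_sub (j : ℤ) (r : ℝ) (x y : ob X j r) (hx : dI X j (j+1) r x = 0)
    (hy : dI X j (j+1) r y = 0) (hxy : dI X j (j+1) r (x - y) = 0) :
    cl X j r x hx - cl X j r y hy = cl X j r (x - y) hxy :=
  clsK_sub (X.obj (op r)) j x y hx hy hxy

lemma cl_natural (j : ℤ) {r r' : ℝ} (h : r ≤ r') (x : ob X j r') (hx : dI X j (j+1) r' x = 0)
    (hx' : dI X j (j+1) r (rs X j h x) = 0) :
    hrs X j h (cl X j r' x hx) = cl X j r (rs X j h x) hx' :=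
  clsK_natural (X.map (homOfLE h).op) j x hx hx'

lemma rs_cocycle (j : ℤ) {r r' : ℝ} (h : r ≤ r') (z : ob X j r') (hz : dI X j (j+1) r' z = 0) :
    dI X j (j+1) r (rs X j h z) = 0 := by
  rw [← rs_dI, hz, map_zero]

/-- The key successor-step construction. -/
lemma step (h1 : ∀ (k : ℤ) (r s : ℝ) (h : r ≤ s),
      Function.Surjective ((componentFunctor X k).map (homOfLE h).op))
    (h3 : ∀ (j : ℤ) (s : ℝ),
      IsIso (colimit.desc (restrictGT (cohomologyFunctor X j) s)
        (coconeGT (cohomologyFunctor X j) s)))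
    (j : ℤ) (s σ : ℝ) (hσ : σ < s) (z : ob X j s) (hz : dI X j (j+1) s z = 0)
    (hco : ∀ (r : ℝ) (hr : r < s), ∃ b : ob X (j-1) r, dI X (j-1) j r b = rs X j hr.le z)
    (bσ : ob X (j-1) σ) (hbσ : dI X (j-1) j σ bσ = rs X j hσ.le z) :
    ∃ (σ' : ℝ) (hσσ' : σ < σ') (hσ's : σ' < s) (b' : ob X (j-1) σ'),
      dI X (j-1) j σ' b' = rs X j hσ's.le z ∧ rs X (j-1) hσσ'.le b' = bσ := by
  set u := (σ + s)/2 with hu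
  have huσ : σ < u := by rw [hu]; linarith
  have hus : u < s := by rw [hu]; linarith
  obtain ⟨c, hc⟩ := hco u hus
  -- the correction cocycle at σ
  set w : ob X (j-1) σ := rs X (j-1) huσ.le c - bσ with hw
  have hdw : dI X (j-1) j σ w = 0 := by
    rw [hw, map_sub, ← rs_dI, hc, rs_rs, hbσ, sub_self]
  have hwcoc : dI X (j-1) ((j-1)+1) σ w = 0 :=
    (dI_congr X (j-1) (by omega) σ rfl).mp hdw
  obtain ⟨t, ht, δ, hδ⟩ := colimit_criterion X (j-1) σ (h3 (j-1) σ)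
    (cl X (j-1) σ w hwcoc)
  set σ' := min t u with hσ'
  have hσσ' : σ < σ' := lt_min ht huσ
  have hσ's : σ' < s := lt_of_le_of_lt (min_le_right t u) hus
  obtain ⟨w', hw', hwcl⟩ := cl_surjective X (j-1) σ' (hrs X (j-1) (min_le_left t u) δ)
  have hw'd : dI X (j-1) j σ' w' = 0 := (dI_congr X (j-1) (by omega) σ' rfl).mpr hw'
  -- restricting w' to σ gives a cocycle in the class of w
  have hrw'coc : dI X (j-1) ((j-1)+1) σ (rs X (j-1) hσσ'.le w') = 0 :=
    rs_cocycle X (j-1) hσσ'.le w' hw'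
  have hclrw' : cl X (j-1) σ (rs X (j-1) hσσ'.le w') hrw'coc = cl X (j-1) σ w hwcoc := by
    rw [← cl_natural X (j-1) hσσ'.le w' hw' hrw'coc, hwcl, hrs_hrs]
    exact hδ
  have hdiffcoc : dI X (j-1) ((j-1)+1) σ (rs X (j-1) hσσ'.le w' - w) = 0 := by
    rw [map_sub, hrw'coc, hwcoc, sub_self]
  have hdiff : cl X (j-1) σ (rs X (j-1) hσσ'.le w' - w) hdiffcoc = 0 := by
    rw [← cl_sub X (j-1) σ _ _ hrw'coc hwcoc hdiffcoc, hclrw', sub_self]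
  obtain ⟨v, hv⟩ := (cl_eq_zero_iff X (j-1) σ _ hdiffcoc).mp hdiff
  obtain ⟨v', hv'⟩ := h1 (j-1-1) σ σ' hσσ'.le v
  have hv'' : rs X (j-1-1) hσσ'.le v' = v := hv'
  refine ⟨σ', hσσ', hσ's,
    rs X (j-1) (min_le_right t u) c - w' + dI X (j-1-1) (j-1) σ' v', ?_, ?_⟩
  · rw [map_add, map_sub, ← rs_dI, hc, rs_rs, hw'd, dI_dI, sub_zero, add_zero]
  · rw [map_add, map_sub, rs_rs, rs_dI, hv'', hv, hw]
    abel


lemma rs_self (k : ℤ) (r : ℝ) (x : ob X k r) : rs X k (le_refl r) x = x := by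
  have e : rs X k (le_refl r) = 𝟙 (ob X k r) := by
    rw [rs]
    have : (homOfLE (le_refl r)).op = 𝟙 (op r) := rfl
    rw [this, CategoryTheory.Functor.map_id]
  rw [fapp' e x]
  rfl

lemma glue_eq
    (h2 : ∀ (k : ℤ) (s : ℝ),
      IsIso (limit.lift (restrictLT (componentFunctor X k) s)
        (coneLT (componentFunctor X k) s)))
    (k : ℤ) (s : ℝ) (x y : ob X k s)
    (hxy : ∀ r : {r : ℝ // r < s}, rs X k r.2.le x = rs X k r.2.le y) : x = y := by
  obtain ⟨w, -, huniq⟩ := limit_criterion X k s (h2 k s) (fun r => rs X k r.2.le x)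
    (fun a b h => by rw [rs_rs])
  rw [huniq x (fun r => rfl), huniq y (fun r => (hxy r).symm)]

/-- pairs (level, element) -/
abbrev PairT (k : ℤ) (s : ℝ) := Σ r : {r : ℝ // r < s}, ob X k r

lemma inj_lemma
    (h1 : ∀ (k : ℤ) (r s : ℝ) (h : r ≤ s),
      Function.Surjective ((componentFunctor X k).map (homOfLE h).op))
    (h2 : ∀ (k : ℤ) (s : ℝ),
      IsIso (limit.lift (restrictLT (componentFunctor X k) s)
        (coneLT (componentFunctor X k) s)))
    (h3 : ∀ (j : ℤ) (s : ℝ),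
      IsIso (colimit.desc (restrictGT (cohomologyFunctor X j) s)
        (coconeGT (cohomologyFunctor X j) s)))
    (j : ℤ) (s : ℝ) (γ : hob X j s)
    (hγ : ∀ r : {r : ℝ // r < s}, hrs X j r.2.le γ = 0) : γ = 0 := by
  obtain ⟨z, hz, rfl⟩ := cl_surjective X j s γ
  have hco : ∀ (r : ℝ) (hr : r < s), ∃ b : ob X (j-1) r,
      dI X (j-1) j r b = rs X j hr.le z := by
    intro r hr
    have h0 : cl X j r (rs X j hr.le z) (rs_cocycle X j hr.le z hz) = 0 := by
      rw [← cl_natural X j hr.le z hz (rs_cocycle X j hr.le z hz)]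
      exact hγ ⟨r, hr⟩
    exact (cl_eq_zero_iff X j r _ _).mp h0
  suffices hfin : ∃ b : ob X (j-1) s, dI X (j-1) j s b = z by
    exact (cl_eq_zero_iff X j s z hz).mpr hfin
  classical
  let Sol : Set (Set (PairT X (j-1) s)) :=
    {G | (∀ (r : {r : ℝ // r < s}) (x y : ob X (j-1) r),
            (⟨r, x⟩ : PairT X (j-1) s) ∈ G → (⟨r, y⟩ : PairT X (j-1) s) ∈ G → x = y) ∧
         (∀ (r r' : {r : ℝ // r < s}) (x : ob X (j-1) r') (h : (r:ℝ) ≤ (r':ℝ)),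
            (⟨r', x⟩ : PairT X (j-1) s) ∈ G →
              (⟨r, rs X (j-1) h x⟩ : PairT X (j-1) s) ∈ G) ∧
         (∀ (r : {r : ℝ // r < s}) (x : ob X (j-1) r),
            (⟨r, x⟩ : PairT X (j-1) s) ∈ G → dI X (j-1) j r x = rs X j r.2.le z)}
  obtain ⟨M, hM⟩ := zorn_subset Sol (by
    intro c hcS hchain
    refine ⟨⋃₀ c, ⟨?_, ?_, ?_⟩, fun G hG => Set.subset_sUnion_of_mem hG⟩
    · rintro r x y ⟨G₁, hG₁, hx⟩ ⟨G₂, hG₂, hy⟩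
      rcases hchain.total hG₁ hG₂ with hsub | hsub
      · exact (hcS hG₂).1 r x y (hsub hx) hy
      · exact (hcS hG₁).1 r x y hx (hsub hy)
    · rintro r r' x h ⟨G₁, hG₁, hx⟩
      exact ⟨G₁, hG₁, (hcS hG₁).2.1 r r' x h hx⟩
    · rintro r x ⟨G₁, hG₁, hx⟩
      exact (hcS hG₁).2.2 r x hx)
  obtain ⟨⟨hMf, hMd, hMs⟩, hMmax⟩ := hM
  let D : Set ℝ := {v | ∃ (hv : v < s) (x : ob X (j-1) v),
    (⟨⟨v, hv⟩, x⟩ : PairT X (j-1) s) ∈ M}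
  have hext : ∀ (τ : ℝ) (hτ : τ < s) (bτ : ob X (j-1) τ),
      (dI X (j-1) j τ bτ = rs X j hτ.le z) →
      (∀ (r : {r : ℝ // r < s}) (x : ob X (j-1) r), (⟨r, x⟩ : PairT X (j-1) s) ∈ M →
        ∃ h : (r:ℝ) ≤ τ, x = rs X (j-1) h bτ) →
      (⟨⟨τ, hτ⟩, bτ⟩ : PairT X (j-1) s) ∈ M := by
    intro τ hτ bτ hbd hagree
    set N : Set (PairT X (j-1) s) :=
      {p | ∃ h : (p.1:ℝ) ≤ τ, p.2 = rs X (j-1) h bτ} with hNdef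
    have hNSol : M ∪ N ∈ Sol := by
      refine ⟨?_, ?_, ?_⟩
      · rintro r x y (hx | ⟨hle, hx⟩) (hy | ⟨hle', hy⟩)
        · exact hMf r x y hx hy
        · obtain ⟨h', hx'⟩ := hagree r x hx
          have hy2 : y = rs X (j-1) hle' bτ := hy
          rw [hx', hy2]
        · obtain ⟨h', hy'⟩ := hagree r y hy
          have hx2 : x = rs X (j-1) hle bτ := hx
          rw [hy', hx2]
        · have hx2 : x = rs X (j-1) hle bτ := hx
          have hy2 : y = rs X (j-1) hle' bτ := hy
          rw [hx2, hy2]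
      · rintro r r' x h (hx | ⟨hle, hx⟩)
        · exact Or.inl (hMd r r' x h hx)
        · refine Or.inr ⟨h.trans hle, ?_⟩
          show rs X (j-1) h x = _
          rw [show x = rs X (j-1) hle bτ from hx, rs_rs]
      · rintro r x (hx | ⟨hle, hx⟩)
        · exact hMs r x hx
        · rw [show x = rs X (j-1) hle bτ from hx, ← rs_dI, hbd, rs_rs]
    have hsub : M ∪ N ⊆ M := hMmax hNSol Set.subset_union_left
    exact hsub (Or.inr ⟨le_refl τ, (rs_self X (j-1) τ bτ).symm⟩)
  have hfull : ∀ r : {r : ℝ // r < s}, ∃ x : ob X (j-1) r,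
      (⟨r, x⟩ : PairT X (j-1) s) ∈ M := by
    by_contra hcon
    push_neg at hcon
    obtain ⟨r₀, hr₀⟩ := hcon
    by_cases hne : D.Nonempty
    · have hbdd : BddAbove D := ⟨s, by rintro v ⟨hv, -⟩; exact hv.le⟩
      set σ := sSup D with hσdef
      have hσs : σ ≤ s := csSup_le hne (by rintro v ⟨hv, -⟩; exact hv.le)
      have hlow : ∀ (v : ℝ), v < σ → ∃ (hv : v < s) (x : ob X (j-1) v),
          (⟨⟨v, hv⟩, x⟩ : PairT X (j-1) s) ∈ M := by
        intro v hv
        obtain ⟨d, hdD, hvd⟩ := exists_lt_of_lt_csSup hne hv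
        obtain ⟨hds, x, hxM⟩ := hdD
        exact ⟨lt_trans hvd hds, rs X (j-1) hvd.le x,
          hMd ⟨v, lt_trans hvd hds⟩ ⟨d, hds⟩ x hvd.le hxM⟩
      by_cases hσD : σ ∈ D
      · obtain ⟨hσs', bσ, hbσM⟩ := hσD
        have hbσd := hMs ⟨σ, hσs'⟩ bσ hbσM
        obtain ⟨σ', hσσ', hσ's, b', hb'd, hb'r⟩ := step X h1 h3 j s σ hσs' z hz hco bσ hbσd
        have hb'M : (⟨⟨σ', hσ's⟩, b'⟩ : PairT X (j-1) s) ∈ M := by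
          apply hext σ' hσ's b' hb'd
          intro r x hx
          have hrσ : (r:ℝ) ≤ σ := le_csSup hbdd ⟨r.2, x, hx⟩
          refine ⟨hrσ.trans hσσ'.le, ?_⟩
          have hx' := hMf r x (rs X (j-1) hrσ bσ) hx (hMd r ⟨σ, hσs'⟩ bσ hrσ hbσM)
          rw [hx', ← hb'r, rs_rs]
        have : σ' ≤ σ := le_csSup hbdd ⟨hσ's, b', hb'M⟩
        linarith
      · have hσs' : σ < s := by
          rcases lt_or_eq_of_le hσs with h | h
          · exact h
          · exfalso
            obtain ⟨hv, x, hxM⟩ := hlow r₀.1 (by rw [h]; exact r₀.2)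
            exact hr₀ x hxM
        have hmem : ∀ r : {r : ℝ // r < σ}, ∃ x : ob X (j-1) r,
            (⟨⟨r.1, lt_trans r.2 hσs'⟩, x⟩ : PairT X (j-1) s) ∈ M := by
          intro r
          obtain ⟨hv, x, hxM⟩ := hlow r.1 r.2
          exact ⟨x, hxM⟩
        choose f hf using hmem
        have hcompat : ∀ (a b : {r : ℝ // r < σ}) (h : (a:ℝ) ≤ (b:ℝ)),
            rs X (j-1) h (f b) = f a := by
          intro a b h
          exact hMf ⟨a.1, lt_trans a.2 hσs'⟩ _ _
            (hMd ⟨a.1, lt_trans a.2 hσs'⟩ ⟨b.1, lt_trans b.2 hσs'⟩ (f b) h (hf b)) (hf a)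
        obtain ⟨bσ, hbσ, -⟩ := limit_criterion X (j-1) σ (h2 (j-1) σ) f hcompat
        have hbσd : dI X (j-1) j σ bσ = rs X j hσs'.le z := by
          apply glue_eq X h2 j σ
          intro r
          rw [rs_dI, hbσ r, hMs ⟨r.1, lt_trans r.2 hσs'⟩ (f r) (hf r), rs_rs]
        refine hσD ⟨hσs', bσ, hext σ hσs' bσ hbσd (fun r x hx => ?_)⟩
        have hrD : (r:ℝ) ∈ D := ⟨r.2, x, hx⟩
        have hrσ : (r:ℝ) ≤ σ := le_csSup hbdd hrD
        have hrlt : (r:ℝ) < σ := lt_of_le_of_ne hrσ (fun hEq => hσD (hEq ▸ hrD))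
        refine ⟨hrσ, ?_⟩
        have hx' := hMf r x (f ⟨r.1, hrlt⟩) hx (hf ⟨r.1, hrlt⟩)
        rw [hx', ← hbσ ⟨r.1, hrlt⟩]
    · obtain ⟨b, hb⟩ := hco (s-1) (by linarith)
      have hMempty : ∀ p : PairT X (j-1) s, p ∉ M := by
        intro p hp
        exact hne ⟨p.1.1, p.1.2, p.2, hp⟩
      have := hext (s-1) (by linarith) b hb
        (fun r x hx => absurd hx (hMempty _))
      exact hMempty _ this
  choose f hf using hfull
  have hcompat : ∀ (a b : {r : ℝ // r < s}) (h : (a:ℝ) ≤ (b:ℝ)),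
      rs X (j-1) h (f b) = f a :=
    fun a b h => hMf a _ _ (hMd a b (f b) h (hf b)) (hf a)
  obtain ⟨b, hb, -⟩ := limit_criterion X (j-1) s (h2 (j-1) s) f hcompat
  refine ⟨b, ?_⟩
  apply glue_eq X h2 j s
  intro r
  rw [rs_dI, hb r, hMs r (f r) (hf r)]


/-- successor step for surjectivity -/
lemma stepS (h1 : ∀ (k : ℤ) (r s : ℝ) (h : r ≤ s),
      Function.Surjective ((componentFunctor X k).map (homOfLE h).op))
    (j : ℤ) (s σ : ℝ) (hσ : σ < s)
    (f : ∀ r : {r : ℝ // r < s}, hob X j r)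
    (hf : ∀ (a b : {r : ℝ // r < s}) (h : (a:ℝ) ≤ (b:ℝ)), hrs X j h (f b) = f a)
    (zσ : ob X j σ) (hzσ : dI X j (j+1) σ zσ = 0)
    (hcl : cl X j σ zσ hzσ = f ⟨σ, hσ⟩) :
    ∃ (σ' : ℝ) (hσσ' : σ < σ') (hσ's : σ' < s) (z' : ob X j σ')
      (hz' : dI X j (j+1) σ' z' = 0),
      cl X j σ' z' hz' = f ⟨σ', hσ's⟩ ∧ rs X j hσσ'.le z' = zσ := by
  set u := (σ + s)/2 with hu
  have huσ : σ < u := by rw [hu]; linarith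
  have hus : u < s := by rw [hu]; linarith
  obtain ⟨w, hw, hwcl⟩ := cl_surjective X j u (f ⟨u, hus⟩)
  have hdcoc : dI X j (j+1) σ (rs X j huσ.le w - zσ) = 0 := by
    rw [map_sub, rs_cocycle X j huσ.le w hw, hzσ, sub_self]
  have hdcl : cl X j σ (rs X j huσ.le w - zσ) hdcoc = 0 := by
    rw [← cl_sub X j σ _ _ (rs_cocycle X j huσ.le w hw) hzσ hdcoc, hcl,
      ← cl_natural X j huσ.le w hw (rs_cocycle X j huσ.le w hw), hwcl,
      hf ⟨σ, hσ⟩ ⟨u, hus⟩ huσ.le, sub_self]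
  obtain ⟨b, hb⟩ := (cl_eq_zero_iff X j σ _ hdcoc).mp hdcl
  obtain ⟨b', hb'⟩ := h1 (j-1) σ u huσ.le b
  have hb'' : rs X (j-1) huσ.le b' = b := hb'
  have hcb : dI X j (j+1) u (dI X (j-1) j u b') = 0 := dI_dI X (j-1) j (j+1) u b'
  have hz' : dI X j (j+1) u (w - dI X (j-1) j u b') = 0 := by
    rw [map_sub, hw, hcb, sub_self]
  refine ⟨u, huσ, hus, w - dI X (j-1) j u b', hz', ?_, ?_⟩
  · rw [← cl_sub X j u w _ hw hcb hz', hwcl,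
      (cl_eq_zero_iff X j u _ hcb).mpr ⟨b', rfl⟩, sub_zero]
  · rw [map_sub, rs_dI, hb'', hb]
    abel

lemma surj_lemma
    (h1 : ∀ (k : ℤ) (r s : ℝ) (h : r ≤ s),
      Function.Surjective ((componentFunctor X k).map (homOfLE h).op))
    (h2 : ∀ (k : ℤ) (s : ℝ),
      IsIso (limit.lift (restrictLT (componentFunctor X k) s)
        (coneLT (componentFunctor X k) s)))
    (h3 : ∀ (j : ℤ) (s : ℝ),
      IsIso (colimit.desc (restrictGT (cohomologyFunctor X j) s)
        (coconeGT (cohomologyFunctor X j) s)))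
    (j : ℤ) (s : ℝ)
    (f : ∀ r : {r : ℝ // r < s}, hob X j r)
    (hf : ∀ (a b : {r : ℝ // r < s}) (h : (a:ℝ) ≤ (b:ℝ)), hrs X j h (f b) = f a) :
    ∃ γ : hob X j s, ∀ r : {r : ℝ // r < s}, hrs X j r.2.le γ = f r := by
  classical
  let Sol : Set (Set (PairT X j s)) :=
    {G | (∀ (r : {r : ℝ // r < s}) (x y : ob X j r),
            (⟨r, x⟩ : PairT X j s) ∈ G → (⟨r, y⟩ : PairT X j s) ∈ G → x = y) ∧
         (∀ (r r' : {r : ℝ // r < s}) (x : ob X j r') (h : (r:ℝ) ≤ (r':ℝ)),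
            (⟨r', x⟩ : PairT X j s) ∈ G →
              (⟨r, rs X j h x⟩ : PairT X j s) ∈ G) ∧
         (∀ (r : {r : ℝ // r < s}) (x : ob X j r),
            (⟨r, x⟩ : PairT X j s) ∈ G →
              ∃ hx : dI X j (j+1) r x = 0, cl X j r x hx = f r)}
  obtain ⟨M, hM⟩ := zorn_subset Sol (by
    intro c hcS hchain
    refine ⟨⋃₀ c, ⟨?_, ?_, ?_⟩, fun G hG => Set.subset_sUnion_of_mem hG⟩
    · rintro r x y ⟨G₁, hG₁, hx⟩ ⟨G₂, hG₂, hy⟩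
      rcases hchain.total hG₁ hG₂ with hsub | hsub
      · exact (hcS hG₂).1 r x y (hsub hx) hy
      · exact (hcS hG₁).1 r x y hx (hsub hy)
    · rintro r r' x h ⟨G₁, hG₁, hx⟩
      exact ⟨G₁, hG₁, (hcS hG₁).2.1 r r' x h hx⟩
    · rintro r x ⟨G₁, hG₁, hx⟩
      exact (hcS hG₁).2.2 r x hx)
  obtain ⟨⟨hMf, hMd, hMs⟩, hMmax⟩ := hM
  let D : Set ℝ := {v | ∃ (hv : v < s) (x : ob X j v),
    (⟨⟨v, hv⟩, x⟩ : PairT X j s) ∈ M}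
  have hext : ∀ (τ : ℝ) (hτ : τ < s) (zτ : ob X j τ)
      (hzτ : dI X j (j+1) τ zτ = 0),
      (cl X j τ zτ hzτ = f ⟨τ, hτ⟩) →
      (∀ (r : {r : ℝ // r < s}) (x : ob X j r), (⟨r, x⟩ : PairT X j s) ∈ M →
        ∃ h : (r:ℝ) ≤ τ, x = rs X j h zτ) →
      (⟨⟨τ, hτ⟩, zτ⟩ : PairT X j s) ∈ M := by
    intro τ hτ zτ hzτ hclτ hagree
    set N : Set (PairT X j s) :=
      {p | ∃ h : (p.1:ℝ) ≤ τ, p.2 = rs X j h zτ} with hNdef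
    have hNSol : M ∪ N ∈ Sol := by
      refine ⟨?_, ?_, ?_⟩
      · rintro r x y (hx | ⟨hle, hx⟩) (hy | ⟨hle', hy⟩)
        · exact hMf r x y hx hy
        · obtain ⟨h', hx'⟩ := hagree r x hx
          have hy2 : y = rs X j hle' zτ := hy
          rw [hx', hy2]
        · obtain ⟨h', hy'⟩ := hagree r y hy
          have hx2 : x = rs X j hle zτ := hx
          rw [hy', hx2]
        · have hx2 : x = rs X j hle zτ := hx
          have hy2 : y = rs X j hle' zτ := hy
          rw [hx2, hy2]
      · rintro r r' x h (hx | ⟨hle, hx⟩)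
        · exact Or.inl (hMd r r' x h hx)
        · refine Or.inr ⟨h.trans hle, ?_⟩
          show rs X j h x = _
          rw [show x = rs X j hle zτ from hx, rs_rs]
      · rintro r x (hx | ⟨hle, hx⟩)
        · exact hMs r x hx
        · rw [show x = rs X j hle zτ from hx]
          refine ⟨rs_cocycle X j hle zτ hzτ, ?_⟩
          rw [← cl_natural X j hle zτ hzτ (rs_cocycle X j hle zτ hzτ), hclτ,
            hf r ⟨τ, hτ⟩ hle]
    have hsub : M ∪ N ⊆ M := hMmax hNSol Set.subset_union_left
    exact hsub (Or.inr ⟨le_refl τ, (rs_self X j τ zτ).symm⟩)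
  have hfull : ∀ r : {r : ℝ // r < s}, ∃ x : ob X j r,
      (⟨r, x⟩ : PairT X j s) ∈ M := by
    by_contra hcon
    push_neg at hcon
    obtain ⟨r₀, hr₀⟩ := hcon
    by_cases hne : D.Nonempty
    · have hbdd : BddAbove D := ⟨s, by rintro v ⟨hv, -⟩; exact hv.le⟩
      set σ := sSup D with hσdef
      have hσs : σ ≤ s := csSup_le hne (by rintro v ⟨hv, -⟩; exact hv.le)
      have hlow : ∀ (v : ℝ), v < σ → ∃ (hv : v < s) (x : ob X j v),
          (⟨⟨v, hv⟩, x⟩ : PairT X j s) ∈ M := by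
        intro v hv
        obtain ⟨d, hdD, hvd⟩ := exists_lt_of_lt_csSup hne hv
        obtain ⟨hds, x, hxM⟩ := hdD
        exact ⟨lt_trans hvd hds, rs X j hvd.le x,
          hMd ⟨v, lt_trans hvd hds⟩ ⟨d, hds⟩ x hvd.le hxM⟩
      by_cases hσD : σ ∈ D
      · obtain ⟨hσs', zσ, hzσM⟩ := hσD
        obtain ⟨hzσ, hclσ⟩ := hMs ⟨σ, hσs'⟩ zσ hzσM
        obtain ⟨σ', hσσ', hσ's, z', hz', hclz', hrsz'⟩ :=
          stepS X h1 j s σ hσs' f hf zσ hzσ hclσ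
        have hz'M : (⟨⟨σ', hσ's⟩, z'⟩ : PairT X j s) ∈ M := by
          apply hext σ' hσ's z' hz' hclz'
          intro r x hx
          have hrσ : (r:ℝ) ≤ σ := le_csSup hbdd ⟨r.2, x, hx⟩
          refine ⟨hrσ.trans hσσ'.le, ?_⟩
          have hx' := hMf r x (rs X j hrσ zσ) hx (hMd r ⟨σ, hσs'⟩ zσ hrσ hzσM)
          rw [hx', ← hrsz', rs_rs]
        have : σ' ≤ σ := le_csSup hbdd ⟨hσ's, z', hz'M⟩
        linarith
      · have hσs' : σ < s := by
          rcases lt_or_eq_of_le hσs with h | h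
          · exact h
          · exfalso
            obtain ⟨hv, x, hxM⟩ := hlow r₀.1 (by rw [h]; exact r₀.2)
            exact hr₀ x hxM
        have hmem : ∀ r : {r : ℝ // r < σ}, ∃ x : ob X j r,
            (⟨⟨r.1, lt_trans r.2 hσs'⟩, x⟩ : PairT X j s) ∈ M := by
          intro r
          obtain ⟨hv, x, hxM⟩ := hlow r.1 r.2
          exact ⟨x, hxM⟩
        choose g hg using hmem
        have hcompat : ∀ (a b : {r : ℝ // r < σ}) (h : (a:ℝ) ≤ (b:ℝ)),
            rs X j h (g b) = g a := by
          intro a b h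
          exact hMf ⟨a.1, lt_trans a.2 hσs'⟩ _ _
            (hMd ⟨a.1, lt_trans a.2 hσs'⟩ ⟨b.1, lt_trans b.2 hσs'⟩ (g b) h (hg b)) (hg a)
        obtain ⟨zσ, hzσr, -⟩ := limit_criterion X j σ (h2 j σ) g hcompat
        have hzσ : dI X j (j+1) σ zσ = 0 := by
          apply glue_eq X h2 (j+1) σ
          intro r
          obtain ⟨hgc, -⟩ := hMs ⟨r.1, lt_trans r.2 hσs'⟩ (g r) (hg r)
          rw [rs_dI, hzσr r, map_zero]
          exact hgc
        have hclσ : cl X j σ zσ hzσ = f ⟨σ, hσs'⟩ := by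
          rw [← sub_eq_zero]
          apply inj_lemma X h1 h2 h3 j σ
          intro r
          rw [map_sub]
          obtain ⟨hgc, hgcl⟩ := hMs ⟨r.1, lt_trans r.2 hσs'⟩ (g r) (hg r)
          have e1 : hrs X j r.2.le (cl X j σ zσ hzσ) = f ⟨r.1, lt_trans r.2 hσs'⟩ := by
            rw [cl_natural X j r.2.le zσ hzσ (rs_cocycle X j r.2.le zσ hzσ)]
            have e2 : cl X j r.1 (rs X j r.2.le zσ) (rs_cocycle X j r.2.le zσ hzσ) =
                cl X j r.1 (g r) hgc := by
              congr 1
              exact hzσr r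
            rw [e2, hgcl]
          rw [e1, hf ⟨r.1, lt_trans r.2 hσs'⟩ ⟨σ, hσs'⟩ r.2.le, sub_self]
        refine hσD ⟨hσs', zσ, hext σ hσs' zσ hzσ hclσ (fun r x hx => ?_)⟩
        have hrD : (r:ℝ) ∈ D := ⟨r.2, x, hx⟩
        have hrσ : (r:ℝ) ≤ σ := le_csSup hbdd hrD
        have hrlt : (r:ℝ) < σ := lt_of_le_of_ne hrσ (fun hEq => hσD (hEq ▸ hrD))
        refine ⟨hrσ, ?_⟩
        have hx' := hMf r x (g ⟨r.1, hrlt⟩) hx (hg ⟨r.1, hrlt⟩)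
        rw [hx', ← hzσr ⟨r.1, hrlt⟩]
    · obtain ⟨z₁, hz₁, hclz₁⟩ := cl_surjective X j (s-1) (f ⟨s-1, by linarith⟩)
      have hMempty : ∀ p : PairT X j s, p ∉ M := by
        intro p hp
        exact hne ⟨p.1.1, p.1.2, p.2, hp⟩
      have := hext (s-1) (by linarith) z₁ hz₁ hclz₁
        (fun r x hx => absurd hx (hMempty _))
      exact hMempty _ this
  choose g hg using hfull
  have hcompat : ∀ (a b : {r : ℝ // r < s}) (h : (a:ℝ) ≤ (b:ℝ)),
      rs X j h (g b) = g a :=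
    fun a b h => hMf a _ _ (hMd a b (g b) h (hg b)) (hg a)
  obtain ⟨z, hzr, -⟩ := limit_criterion X j s (h2 j s) g hcompat
  have hz : dI X j (j+1) s z = 0 := by
    apply glue_eq X h2 (j+1) s
    intro r
    obtain ⟨hgc, -⟩ := hMs r (g r) (hg r)
    rw [rs_dI, hzr r, map_zero]
    exact hgc
  refine ⟨cl X j s z hz, fun r => ?_⟩
  obtain ⟨hgc, hgcl⟩ := hMs r (g r) (hg r)
  rw [cl_natural X j r.2.le z hz (rs_cocycle X j r.2.le z hz)]
  have e2 : cl X j r.1 (rs X j r.2.le z) (rs_cocycle X j r.2.le z hz) =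
      cl X j r.1 (g r) hgc := by
    congr 1
    exact hzr r
  rw [e2, hgcl]


end Infra

/-- If (1) all degreewise transition maps `X_s^k → X_r^k` are surjective,
(2) `X_s^k → lim_{r<s} X_r^k` is an isomorphism for all `k`, `s`, and
(3) `colim_{t>s} H^j(X_t) → H^j(X_s)` is an isomorphism for all `j`, `s`, then the
natural map `H^j(X_s) → lim_{r<s} H^j(X_r)` is bijective for all `j`, `s`. -/
theorem cohomology_to_lim_bijective {R : Type} [Ring R]
    (X : ℝᵒᵖ ⥤ CochainComplex (ModuleCat R) ℤ)
    (h1 : ∀ (k : ℤ) (r s : ℝ) (h : r ≤ s),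
      Function.Surjective ((componentFunctor X k).map (homOfLE h).op))
    (h2 : ∀ (k : ℤ) (s : ℝ),
      IsIso (limit.lift (restrictLT (componentFunctor X k) s)
        (coneLT (componentFunctor X k) s)))
    (h3 : ∀ (j : ℤ) (s : ℝ),
      IsIso (colimit.desc (restrictGT (cohomologyFunctor X j) s)
        (coconeGT (cohomologyFunctor X j) s))) :
    ∀ (j : ℤ) (s : ℝ),
      Function.Bijective (limit.lift (restrictLT (cohomologyFunctor X j) s)
        (coneLT (cohomologyFunctor X j) s)) := by
  intro j s
  apply bijective_criterion X j s
  · intro γ₁ γ₂ hr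
    rw [← sub_eq_zero]
    apply inj_lemma X h1 h2 h3 j s
    intro r
    rw [map_sub, hr r, sub_self]
  · intro f hf
    exact surj_lemma X h1 h2 h3 j s f hf
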